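/- For a real number s > 1 define f_s(t) = ∑_{n=1}^∞ (n+1)^{-s} e^{-n·t} for t ≥ 0. Then: (i) if s > 2, f_s is differentiable at t = 0 within [0, ∞) with derivative -∑_{n=1}^∞ n·(n+1)^{-s} (a convergent series); (ii) if 1 < s ≤ 2, the difference quotient (f_s(t) - f_s(0))/t tends to -∞ as t tends to 0 from the right. (This is the analytic core of the Proposition on the number of equilibrium states at β_c: |∂Σ₃/∂Z| at Z = P₃₄(β) is finite if and only if εβ > 2, which decides whether the local equilibrium state opens out to a global one.) -/
import Mathlib


open Filter

/-- `f_s(t) = ∑_{n=1}^∞ (n+1)^{-s} e^{-n t}` (indexed by `n : ℕ` via `n ↦ n+1`). -/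
noncomputable def fS (s t : ℝ) : ℝ :=
  ∑' n : ℕ, ((n : ℝ) + 2) ^ (-s) * Real.exp (-((n : ℝ) + 1) * t)

lemma myShift (p : ℝ) : Summable (fun n : ℕ => ((n : ℝ) + 2) ^ p) ↔ p < -1 := by
  have h1 : (fun n : ℕ => ((n : ℝ) + 2) ^ p) = fun n : ℕ => (((n + 2 : ℕ)) : ℝ) ^ p := by
    funext n; push_cast; ring_nf
  rw [h1, summable_nat_add_iff (f := fun n : ℕ => (n : ℝ) ^ p) 2, Real.summable_nat_rpow]

lemma sumA {s : ℝ} (hs : 1 < s) : Summable (fun n : ℕ => ((n : ℝ) + 2) ^ (-s)) :=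
  (myShift _).mpr (by linarith)

lemma sumMix {s θ : ℝ} (h : θ < s - 1) (hθ : 0 ≤ θ) :
    Summable (fun n : ℕ => ((n : ℝ) + 1) ^ θ * ((n : ℝ) + 2) ^ (-s)) := by
  apply Summable.of_nonneg_of_le (fun n => by positivity) (fun n => ?_)
    ((myShift (θ - s)).mpr (by linarith))
  have h1 : ((n : ℝ) + 1) ^ θ ≤ ((n : ℝ) + 2) ^ θ :=
    Real.rpow_le_rpow (by positivity) (by linarith) hθ
  have h2 : ((n : ℝ) + 2) ^ θ * ((n : ℝ) + 2) ^ (-s) = ((n : ℝ) + 2) ^ (θ - s) := by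
    rw [← Real.rpow_add (by positivity)]; ring_nf
  have h3 : (0:ℝ) ≤ ((n : ℝ) + 2) ^ (-s) := by positivity
  nlinarith [mul_le_mul_of_nonneg_right h1 h3]

lemma sumB {s : ℝ} (hs : 2 < s) :
    Summable (fun n : ℕ => ((n : ℝ) + 1) * ((n : ℝ) + 2) ^ (-s)) := by
  have := sumMix (s := s) (θ := 1) (by linarith) zero_le_one
  exact this.congr fun n => by rw [Real.rpow_one]

lemma sumExp {s t : ℝ} (hs : 1 < s) (ht : 0 ≤ t) :
    Summable (fun n : ℕ => ((n : ℝ) + 2) ^ (-s) * Real.exp (-((n : ℝ) + 1) * t)) := by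
  apply Summable.of_nonneg_of_le (fun n => by positivity) (fun n => ?_) (sumA hs)
  have h1 : Real.exp (-((n : ℝ) + 1) * t) ≤ 1 := Real.exp_le_one_iff.mpr (by nlinarith)
  have h3 : (0:ℝ) ≤ ((n : ℝ) + 2) ^ (-s) := by positivity
  nlinarith

lemma fS_zero (s : ℝ) : fS s 0 = ∑' n : ℕ, ((n : ℝ) + 2) ^ (-s) := by
  unfold fS; simp

lemma quotEq {s : ℝ} (hs : 1 < s) {t : ℝ} (ht : 0 < t) :
    (fS s t - fS s 0) / t
      = ∑' n : ℕ, ((n : ℝ) + 2) ^ (-s) * (Real.exp (-((n : ℝ) + 1) * t) - 1) / t := by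
  rw [fS_zero, fS, ← Summable.tsum_sub (sumExp hs ht.le) (sumA hs), tsum_div_const]
  congr 1
  exact tsum_congr fun n => by ring

lemma expLower {x : ℝ} : 0 ≤ Real.exp (-x) - 1 + x := by
  have := Real.add_one_le_exp (-x); linarith

lemma expUpper {x θ : ℝ} (hx : 0 < x) (h1 : 1 ≤ θ) (h2 : θ ≤ 2) :
    Real.exp (-x) - 1 + x ≤ x ^ θ := by
  rcases le_total x 1 with h | h
  · have hb : |Real.exp (-x) - 1 - (-x)| ≤ (-x) ^ 2 :=
      Real.abs_exp_sub_one_sub_id_le (by rwa [abs_neg, abs_of_pos hx])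
    have hx2 : Real.exp (-x) - 1 + x ≤ x ^ 2 := by
      have := (abs_le.mp hb).2; nlinarith
    calc Real.exp (-x) - 1 + x ≤ x ^ 2 := hx2
      _ = x ^ ((2:ℕ) : ℝ) := by rw [Real.rpow_natCast]
      _ ≤ x ^ θ := Real.rpow_le_rpow_of_exponent_ge hx h (by push_cast; linarith)
  · have he : Real.exp (-x) ≤ 1 := Real.exp_le_one_iff.mpr (by linarith)
    calc Real.exp (-x) - 1 + x ≤ x := by linarith
      _ = x ^ (1:ℝ) := (Real.rpow_one x).symm
      _ ≤ x ^ θ := Real.rpow_le_rpow_of_exponent_le h h1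

/-- For `s > 1`: (i) if `s > 2`, `f_s` has one-sided derivative `-∑_{n=1}^∞ n (n+1)^{-s}`
(a convergent series) at `t = 0` within `[0,∞)`; (ii) if `1 < s ≤ 2`, the difference
quotient `(f_s(t) - f_s(0))/t` tends to `-∞` as `t → 0⁺`. -/
theorem stmt_10 (s : ℝ) (hs : 1 < s) :
    (2 < s →
      Summable (fun n : ℕ => ((n : ℝ) + 1) * ((n : ℝ) + 2) ^ (-s)) ∧
      HasDerivWithinAt (fS s) (-∑' n : ℕ, ((n : ℝ) + 1) * ((n : ℝ) + 2) ^ (-s))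
        (Set.Ici 0) 0) ∧
    (s ≤ 2 →
      Tendsto (fun t : ℝ => (fS s t - fS s 0) / t) (nhdsWithin 0 (Set.Ioi 0)) atBot) := by
  constructor
  · -- Part (i)
    intro hs2
    refine ⟨sumB hs2, ?_⟩
    set L : ℝ := ∑' n : ℕ, ((n : ℝ) + 1) * ((n : ℝ) + 2) ^ (-s) with hL
    -- choose an exponent θ
    set θ : ℝ := min 2 (s / 2) with hθdef
    have hθ1 : 1 < θ := lt_min (by norm_num) (by linarith)
    have hθ2 : θ ≤ 2 := min_le_left _ _
    have hθ3 : θ < s - 1 := by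
      rcases le_or_gt (s / 2) 2 with h | h
      · rw [hθdef, min_eq_right h]; linarith
      · rw [hθdef, min_eq_left h.le]; linarith
    set C : ℝ := ∑' n : ℕ, ((n : ℝ) + 1) ^ θ * ((n : ℝ) + 2) ^ (-s) with hC
    rw [hasDerivWithinAt_iff_tendsto_slope, Set.Ici_sdiff_left]
    -- key identity and bounds for t > 0
    have hkey : ∀ t : ℝ, 0 < t →
        slope (fS s) 0 t + L
          = ∑' n : ℕ, ((n : ℝ) + 2) ^ (-s)
              * (Real.exp (-((n : ℝ) + 1) * t) - 1 + ((n : ℝ) + 1) * t) / t := by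
      intro t ht
      have hsl : slope (fS s) 0 t = (fS s t - fS s 0) / t := by
        rw [slope_def_field, sub_zero]
      have hsum1 : Summable (fun n : ℕ =>
          ((n : ℝ) + 2) ^ (-s) * (Real.exp (-((n : ℝ) + 1) * t) - 1) / t) := by
        apply Summable.div_const
        exact ((sumExp hs ht.le).sub (sumA hs)).congr fun n => by ring
      rw [hsl, quotEq hs ht, hL, ← Summable.tsum_add hsum1 (sumB hs2)]
      exact tsum_congr fun n => by field_simp
    have hnonneg : ∀ᶠ t in nhdsWithin (0:ℝ) (Set.Ioi 0), 0 ≤ slope (fS s) 0 t + L := by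
      filter_upwards [self_mem_nhdsWithin] with t ht
      rw [hkey t ht]
      apply tsum_nonneg
      intro n
      have h1 : (0:ℝ) ≤ Real.exp (-((n : ℝ) + 1) * t) - 1 + ((n : ℝ) + 1) * t := by
        nlinarith [Real.add_one_le_exp (-((n : ℝ) + 1) * t)]
      have h2 : (0:ℝ) ≤ ((n : ℝ) + 2) ^ (-s) := by positivity
      exact div_nonneg (mul_nonneg h2 h1) (le_of_lt (Set.mem_Ioi.mp ht))
    have hupper : ∀ᶠ t in nhdsWithin (0:ℝ) (Set.Ioi 0),
        slope (fS s) 0 t + L ≤ C * t ^ (θ - 1) := by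
      filter_upwards [self_mem_nhdsWithin] with t ht
      have ht : (0:ℝ) < t := ht
      rw [hkey t ht, hC, ← tsum_mul_right]
      apply Summable.tsum_le_tsum _ _ ((sumMix hθ3 (by linarith)).mul_right _)
      · intro n
        have hx : (0:ℝ) < ((n : ℝ) + 1) * t := by positivity
        have hub := expUpper hx hθ1.le hθ2
        have hmr : (((n : ℝ) + 1) * t) ^ θ = ((n : ℝ) + 1) ^ θ * t ^ θ :=
          Real.mul_rpow (by positivity) ht.le
        have htθ : t ^ θ / t = t ^ (θ - 1) := by
          rw [Real.rpow_sub ht, Real.rpow_one]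
        have h2 : (0:ℝ) ≤ ((n : ℝ) + 2) ^ (-s) := by positivity
        have hnum : Real.exp (-((n : ℝ) + 1) * t) - 1 + ((n : ℝ) + 1) * t
            ≤ ((n : ℝ) + 1) ^ θ * t ^ θ := by
          rw [neg_mul]; rw [hmr] at hub; exact hub
        calc ((n : ℝ) + 2) ^ (-s) * (Real.exp (-((n : ℝ) + 1) * t) - 1 + ((n : ℝ) + 1) * t) / t
            ≤ ((n : ℝ) + 2) ^ (-s) * (((n : ℝ) + 1) ^ θ * t ^ θ) / t :=
              (div_le_div_iff_of_pos_right ht).mpr (mul_le_mul_of_nonneg_left hnum h2)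
          _ = ((n : ℝ) + 1) ^ θ * ((n : ℝ) + 2) ^ (-s) * t ^ (θ - 1) := by
              rw [← htθ]; ring
      · -- summability of LHS
        have hsum1 : Summable (fun n : ℕ =>
            ((n : ℝ) + 2) ^ (-s) * (Real.exp (-((n : ℝ) + 1) * t) - 1 + ((n : ℝ) + 1) * t) / t) := by
          apply Summable.div_const
          have := ((sumExp hs ht.le).sub (sumA hs)).add ((sumB hs2).mul_right t)
          exact this.congr fun n => by ring
        exact hsum1
    have hg0 : Tendsto (fun t : ℝ => C * t ^ (θ - 1)) (nhdsWithin 0 (Set.Ioi 0)) (nhds 0) := by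
      have hc : ContinuousAt (fun x : ℝ => x ^ (θ - 1)) 0 :=
        Real.continuousAt_rpow_const 0 (θ - 1) (Or.inr (by linarith))
      have h0 : (0:ℝ) ^ (θ - 1) = 0 := Real.zero_rpow (ne_of_gt (by linarith))
      have := (hc.tendsto.mono_left (nhdsWithin_le_nhds (s := Set.Ioi (0:ℝ)))).const_mul C
      rw [h0, mul_zero] at this
      exact this
    have hsq : Tendsto (fun t : ℝ => slope (fS s) 0 t + L) (nhdsWithin 0 (Set.Ioi 0)) (nhds 0) :=
      squeeze_zero' hnonneg hupper hg0
    have := hsq.sub_const L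
    rw [zero_sub] at this
    exact this.congr fun t => by ring
  · -- Part (ii)
    intro hs2
    have hns : ¬ Summable (fun n : ℕ => ((n : ℝ) + 1) * ((n : ℝ) + 2) ^ (-s)) := by
      intro h
      have h2 : Summable (fun n : ℕ => ((n : ℝ) + 2) ^ (1 - s)) := by
        apply Summable.of_nonneg_of_le (fun n => by positivity) (fun n => ?_) (h.mul_left 2)
        have he : ((n : ℝ) + 2) ^ (1 - s) = ((n : ℝ) + 2) * ((n : ℝ) + 2) ^ (-s) := by
          rw [show (1 - s) = 1 + (-s) by ring, Real.rpow_add (by positivity), Real.rpow_one]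
        have h3 : (0:ℝ) ≤ ((n : ℝ) + 2) ^ (-s) := by positivity
        rw [he]; nlinarith
      have := (myShift _).mp h2
      linarith
    have hmono : Tendsto (fun N : ℕ => ∑ n ∈ Finset.range N, ((n : ℝ) + 1) * ((n : ℝ) + 2) ^ (-s))
        atTop atTop := by
      rw [← not_summable_iff_tendsto_nat_atTop_of_nonneg (fun n => by positivity)]
      exact hns
    rw [Filter.tendsto_atBot]
    intro M
    obtain ⟨N, hN⟩ := (hmono.eventually_ge_atTop (-2 * M)).exists
    have hδpos : (0:ℝ) < 1 / (2 * ((N : ℝ) + 1)) := by positivity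
    filter_upwards [Ioo_mem_nhdsGT_of_mem (Set.mem_Ico.mpr ⟨le_refl (0:ℝ), hδpos⟩)] with t ht
    obtain ⟨ht0, htlt⟩ := ht
    rw [quotEq hs ht0]
    set P : ℝ := ∑' n : ℕ, ((n : ℝ) + 2) ^ (-s) * (1 - Real.exp (-((n : ℝ) + 1) * t)) / t with hP
    have hsumP : Summable (fun n : ℕ =>
        ((n : ℝ) + 2) ^ (-s) * (1 - Real.exp (-((n : ℝ) + 1) * t)) / t) := by
      apply Summable.div_const
      exact ((sumA hs).sub (sumExp hs ht0.le)).congr fun n => by ring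
    have hkey : ∀ n ∈ Finset.range N,
        (1/2) * (((n : ℝ) + 1) * ((n : ℝ) + 2) ^ (-s))
          ≤ ((n : ℝ) + 2) ^ (-s) * (1 - Real.exp (-((n : ℝ) + 1) * t)) / t := by
      intro n hn
      have hnN : (n : ℝ) + 1 ≤ (N : ℝ) := by
        have := Finset.mem_range.mp hn
        exact_mod_cast this
      have hx : (0:ℝ) < ((n : ℝ) + 1) * t := by positivity
      have hxle : ((n : ℝ) + 1) * t ≤ 1 / 2 := by
        have h1 : ((n : ℝ) + 1) * t ≤ (N : ℝ) * t :=
          mul_le_mul_of_nonneg_right hnN ht0.le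
        have h2 : (N : ℝ) * t ≤ (N : ℝ) * (1 / (2 * ((N : ℝ) + 1))) :=
          mul_le_mul_of_nonneg_left htlt.le (by positivity)
        have h3 : (N : ℝ) * (1 / (2 * ((N : ℝ) + 1))) ≤ 1 / 2 := by
          rw [mul_one_div, div_le_div_iff₀ (by positivity) (by norm_num)]
          nlinarith [Nat.cast_nonneg (α := ℝ) N]
        calc ((n : ℝ) + 1) * t ≤ (N : ℝ) * t := h1
          _ ≤ _ := h2
          _ ≤ 1 / 2 := h3
      have hb : |Real.exp (-(((n : ℝ) + 1) * t)) - 1 - (-(((n : ℝ) + 1) * t))|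
          ≤ (-(((n : ℝ) + 1) * t)) ^ 2 :=
        Real.abs_exp_sub_one_sub_id_le (by rw [abs_neg, abs_of_pos hx]; linarith)
      have hexp : ((n : ℝ) + 1) * t / 2 ≤ 1 - Real.exp (-(((n : ℝ) + 1) * t)) := by
        have := (abs_le.mp hb).2; nlinarith
      have h3 : (0:ℝ) ≤ ((n : ℝ) + 2) ^ (-s) := by positivity
      rw [neg_mul, le_div_iff₀ ht0]
      nlinarith [mul_le_mul_of_nonneg_left hexp h3]
    have h1 : ∑ n ∈ Finset.range N, (1/2) * (((n : ℝ) + 1) * ((n : ℝ) + 2) ^ (-s)) ≤ P := by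
      refine le_trans (Finset.sum_le_sum hkey) ?_
      apply Summable.sum_le_tsum _ (fun n _ => ?_) hsumP
      have hx : (0:ℝ) ≤ ((n : ℝ) + 1) * t := by positivity
      have h4 : Real.exp (-((n : ℝ) + 1) * t) ≤ 1 := Real.exp_le_one_iff.mpr (by nlinarith)
      have h3 : (0:ℝ) ≤ ((n : ℝ) + 2) ^ (-s) := by positivity
      apply div_nonneg _ ht0.le
      nlinarith
    have h2 : -M ≤ P := by
      rw [← Finset.mul_sum] at h1
      linarith
    have hPeq : ∑' n : ℕ, ((n : ℝ) + 2) ^ (-s) * (Real.exp (-((n : ℝ) + 1) * t) - 1) / t = -P := by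
      rw [hP, ← tsum_neg]
      exact tsum_congr fun n => by ring
    rw [hPeq]
    linarith
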